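/- Let (a_n) be an arithmetic sequence and (u_n) an increasing sequence of positive integers with u_n = a_{k_n} v_n, where k_n → ∞ and b_{k_n + 1} does not divide v_n for any n. Let (s_i) be an increasing sequence of indices such that a_{k_{s_{i+1}}} ≥ 8 u_{s_i} for all i. Then there exist integers m_t with 1 < m_t ≤ b_t such that the element x ∈ T whose canonical digits are c_t = ⌊b_t/m_t⌋ for t ∈ {k_{s_i} + 1 : i ∈ ℕ} and c_t = 0 otherwise (so supp(x) = {k_{s_i} + 1 : i ∈ ℕ}) satisfies x ∉ t_{(u_n)}(T). -/

import Mathlib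

open Filter Topology Set

noncomputable section

/-- The sequence of ratios `b n = a n / a (n-1)` of an arithmetic sequence. -/
def ratios (a : ℕ → ℕ) (n : ℕ) : ℕ := a n / a (n - 1)

/-- An arithmetic sequence: `a 0 = 1`, strictly increasing, each term divides the next. -/
def IsArithSeq (a : ℕ → ℕ) : Prop :=
  a 0 = 1 ∧ (∀ n, a n < a (n + 1)) ∧ (∀ n, a n ∣ a (n + 1))

/-- The indices `n_k` with `a k = d (n k)`: `n 0 = 1`, `n (k+1) = n k + (b (k+1) - 1)`. -/
def nseq (a : ℕ → ℕ) : ℕ → ℕ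
  | 0 => 1
  | k + 1 => nseq a k + (ratios a (k + 1) - 1)

/-- The lifting function `L(A) = ⋃_{k ∈ A} [n_{k-1}, n_k - 1]`. -/
def liftSet (a : ℕ → ℕ) (A : Set ℕ) : Set ℕ :=
  ⋃ k ∈ A, Set.Icc (nseq a (k - 1)) (nseq a k - 1)

/-- `A ⊆ ℕ` has natural density `δ`. -/
def HasDensity (A : Set ℕ) (δ : ℝ) : Prop :=
  Tendsto (fun n : ℕ => ((A ∩ Set.Iio n).ncard : ℝ) / n) atTop (𝓝 δ)

/-- The upper natural density of `A ⊆ ℕ`. -/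
def upperDensity (A : Set ℕ) : ℝ :=
  limsup (fun n : ℕ => ((A ∩ Set.Iio n).ncard : ℝ) / n) atTop

/-- The sequence `(d n)`: the increasing enumeration of `{r * a k : k ≥ 0, 1 ≤ r < b (k+1)}`. -/
def dSeq (a : ℕ → ℕ) : ℕ → ℕ :=
  Nat.nth (fun m => ∃ k r : ℕ, 1 ≤ r ∧ r < ratios a (k + 1) ∧ m = r * a k)

/-- The characterized subgroup `t_{(u n)}(𝕋)`. -/
def charSub (u : ℕ → ℤ) : Set (AddCircle (1 : ℝ)) :=
  {x | Tendsto (fun n => u n • x) atTop (𝓝 0)}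

/-- The statistically characterized subgroup `t^s_{(u n)}(𝕋)`. -/
def statChar (u : ℕ → ℤ) : Set (AddCircle (1 : ℝ)) :=
  {x | ∀ ε : ℝ, 0 < ε → HasDensity {n : ℕ | ε ≤ ‖u n • x‖} 0}

/-- Density lifting invariant. -/
def Dli (a : ℕ → ℕ) : Prop :=
  ∀ A : Set ℕ, A.Infinite → HasDensity A 0 → HasDensity (liftSet a A) 0

/-- Weakly density lifting invariant. -/
def WeaklyDli (a : ℕ → ℕ) : Prop :=
  ∃ A : Set ℕ, A.Infinite ∧ ∀ m : ℕ, HasDensity (liftSet a ((fun x => x - m) '' A)) 0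

/-- Strongly non density lifting invariant. -/
def StronglyNonDli (a : ℕ → ℕ) : Prop :=
  ∀ A : Set ℕ, A.Infinite → 0 < upperDensity (liftSet a A)

/-!
Put `T i = k (s i) + 1`, so that `x = ∑ᵢ cᵢ / a (T i)` with `cᵢ = ⌊b / mᵢ⌋`, `b = b_{T i}`. Multiplied by
`u (s i)`, the terms `j < i` become integers because `a (T j) ∣ a (k (s i)) ∣ u (s i)`; the term `j = i`
becomes `v (s i) cᵢ / b`, and since `b ∤ v (s i)` the divisor `mᵢ` can be chosen so that this is
within `[1/4, 3/4]` modulo `1`; by the gap condition the tail contributes at most `1/14`.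
Hence `‖u (s i) x‖ ≥ 5/28` for every `i`.
-/

lemma mul_div_two_mul_div_mem_Icc {b w : ℕ} (hw : 0 < w) (hwb : 4 * w ≤ b) :
    (w * (b / (2 * w) : ℕ) : ℝ) / b ∈ Icc (1 / 4 : ℝ) (1 / 2) := by
  have hb : (0 : ℝ) < b := by exact_mod_cast (by omega : 0 < b)
  have hle : ((b / (2 * w) * (2 * w) : ℕ) : ℝ) ≤ b := by exact_mod_cast Nat.div_mul_le_self b _
  have hlt : (b : ℝ) < ((b / (2 * w) * (2 * w) + 2 * w : ℕ) : ℝ) := by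
    exact_mod_cast Nat.lt_div_mul_add (by omega)
  have hwb' : (4 * w : ℝ) ≤ b := by exact_mod_cast hwb
  push_cast at hle hlt
  constructor
  · rw [le_div_iff₀ hb]; linarith
  · rw [div_le_iff₀ hb]; linarith

lemma exists_frac_mul_div_mem_Icc_of_lt {b w : ℕ} (hw : 0 < w) (hwb : w < b) :
    ∃ m, 1 < m ∧ m ≤ b ∧ ∃ z : ℤ, (w * (b / m : ℕ) : ℝ) / b - z ∈ Icc (1 / 4 : ℝ) (3 / 4) := by
  have hb : (0 : ℝ) < b := by exact_mod_cast (by omega : 0 < b)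
  by_cases hsmall : 4 * w ≤ b
  · refine ⟨2 * w, by omega, by omega, 0, ?_⟩
    have h := mul_div_two_mul_div_mem_Icc hw hsmall
    rw [Int.cast_zero, sub_zero]
    exact ⟨h.1, h.2.trans (by norm_num)⟩
  by_cases hlarge : 4 * (b - w) ≤ b
  · -- `w c / b = c - (b - w) c / b`, and the last term lies in `[1/4, 1/2]`
    set c := b / (2 * (b - w))
    refine ⟨2 * (b - w), by omega, by omega, (c : ℤ) - 1, ?_⟩
    have h := mul_div_two_mul_div_mem_Icc (by omega : 0 < b - w) hlarge
    have hsub : (w * c : ℝ) / b - (((c : ℤ) - 1 : ℤ) : ℝ) = 1 - ((b - w : ℕ) * c : ℝ) / b := by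
      rw [Nat.cast_sub hwb.le]; push_cast; field_simp; ring
    rw [hsub]
    exact ⟨by linarith [h.2], by linarith [h.1]⟩
  · refine ⟨b, by omega, le_rfl, 0, ?_⟩
    rw [Nat.div_self (by omega), Int.cast_zero, sub_zero, Nat.cast_one, mul_one]
    have h1 : (b : ℝ) ≤ 4 * w := by exact_mod_cast (by omega : b ≤ 4 * w)
    have h2 : (4 * w : ℝ) ≤ 3 * b := by exact_mod_cast (by omega : 4 * w ≤ 3 * b)
    constructor
    · rw [le_div_iff₀ hb]; linarith
    · rw [div_le_iff₀ hb]; linarith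

lemma exists_frac_mul_div_mem_Icc {b w : ℕ} (hb : 0 < b) (hw : ¬ b ∣ w) :
    ∃ m, 1 < m ∧ m ≤ b ∧ ∃ z : ℤ, (w * (b / m : ℕ) : ℝ) / b - z ∈ Icc (1 / 4 : ℝ) (3 / 4) := by
  obtain ⟨m, hm1, hmb, z, hz⟩ := exists_frac_mul_div_mem_Icc_of_lt
    (Nat.pos_of_ne_zero fun h => hw (Nat.dvd_of_mod_eq_zero h)) (Nat.mod_lt w hb)
  refine ⟨m, hm1, hmb, z + ((w / b * (b / m) : ℕ) : ℤ), ?_⟩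
  have hwdiv : (w : ℝ) = b * (w / b : ℕ) + (w % b : ℕ) := by
    exact_mod_cast (Nat.div_add_mod w b).symm
  have hb' : (b : ℝ) ≠ 0 := by positivity
  convert hz using 1
  rw [hwdiv, Int.cast_add, Int.cast_natCast, Nat.cast_mul]; field_simp; ring

lemma le_norm_coe_of_mem_Icc {δ t : ℝ} (ht : t ∈ Icc δ (1 - δ)) :
    δ ≤ ‖(t : AddCircle (1 : ℝ))‖ := by
  rw [AddCircle.norm_eq, inv_one, one_mul, mul_one]
  rcases le_or_gt (round t) 0 with h | h
  · have : (round t : ℝ) ≤ 0 := by exact_mod_cast h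
    exact (by linarith [ht.1] : δ ≤ t - round t).trans (le_abs_self _)
  · have : (1 : ℝ) ≤ round t := by exact_mod_cast h
    exact (by linarith [ht.2] : δ ≤ -(t - round t)).trans (neg_le_abs _)

lemma coe_natCast_mul_div_eq_zero {A N : ℕ} (h : A ∣ N) (c : ℕ) :
    (((N : ℝ) * (c / A) : ℝ) : AddCircle (1 : ℝ)) = 0 := by
  obtain ⟨q, rfl⟩ := h
  rcases eq_or_ne A 0 with rfl | hA
  · simp
  rw [AddCircle.coe_eq_zero_iff]
  refine ⟨q * c, ?_⟩
  have : (A : ℝ) ≠ 0 := by exact_mod_cast hA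
  rw [zsmul_one]
  push_cast
  field_simp

lemma le_norm_nsmul_coe_tsum {g : ℕ → ℝ} (hg : Summable g) {N i : ℕ}
    (hhead : ∀ j < i, ((N * g j : ℝ) : AddCircle (1 : ℝ)) = 0)
    {z : ℤ} (hmid : N * g i - z ∈ Icc (1 / 4 : ℝ) (3 / 4))
    (htail : N * ∑' r, g (r + (i + 1)) ∈ Icc (0 : ℝ) (1 / 14)) :
    5 / 28 ≤ ‖N • ((∑' j, g j : ℝ) : AddCircle (1 : ℝ))‖ := by
  have hsplit : (N * ∑' j, g j : ℝ) = ∑ j ∈ Finset.range i, N * g j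
      + (N * g i - z + N * ∑' r, g (r + (i + 1))) + z := by
    rw [← hg.sum_add_tsum_nat_add (i + 1), Finset.sum_range_succ, mul_add, mul_add,
      Finset.mul_sum]
    ring
  have hz : ((z : ℝ) : AddCircle (1 : ℝ)) = 0 :=
    (AddCircle.coe_eq_zero_iff 1).2 ⟨z, by simp⟩
  rw [← AddCircle.coe_nsmul, nsmul_eq_mul, hsplit, AddCircle.coe_add, AddCircle.coe_add, hz,
    QuotientAddGroup.mk_sum, Finset.sum_eq_zero fun j hj => hhead j (Finset.mem_range.1 hj),
    zero_add, add_zero]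
  exact le_norm_coe_of_mem_Icc ⟨by linarith [hmid.1, htail.1], by linarith [hmid.2, htail.2]⟩

section Lacunary

variable {D U g : ℕ → ℝ} (hDU : ∀ j, D j ≤ U j) (hUD : ∀ j, 8 * U j ≤ D (j + 1))
include hDU hUD

lemma pow_mul_le_of_lacunary (i r : ℕ) : 8 ^ (r + 1) * U i ≤ D (r + (i + 1)) := by
  induction r with
  | zero => simpa [add_comm] using hUD i
  | succ r ih =>
    calc 8 ^ (r + 1 + 1) * U i = 8 * (8 ^ (r + 1) * U i) := by ring
      _ ≤ 8 * U (r + (i + 1)) := by linarith [hDU (r + (i + 1))]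
      _ ≤ D (r + 1 + (i + 1)) := by rw [add_right_comm]; exact hUD _

variable (hg0 : ∀ j, 0 ≤ g j) (hg : ∀ j, 2 * D j * g j ≤ 1)
include hg0 hg

lemma mul_le_geometric_of_lacunary (i r : ℕ) : U i * g (r + (i + 1)) ≤ 1 / 16 * (1 / 8) ^ r := by
  have h := mul_le_mul_of_nonneg_right (pow_mul_le_of_lacunary hDU hUD i r) (hg0 (r + (i + 1)))
  rw [show (1 / 16 : ℝ) * (1 / 8) ^ r = 1 / 2 / 8 ^ (r + 1) by
      rw [div_pow, one_pow, pow_succ]; field_simp; norm_num,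
    le_div_iff₀ (by positivity)]
  nlinarith [hg (r + (i + 1))]

lemma summable_of_lacunary (hU : 0 < U 0) : Summable g := by
  rw [← summable_nat_add_iff 1]
  refine Summable.of_nonneg_of_le (fun r => hg0 _) (fun r => ?_)
    ((summable_geometric_of_lt_one (by norm_num) (by norm_num : (1 / 8 : ℝ) < 1)).mul_left
      (1 / 16 / U 0))
  rw [div_mul_eq_mul_div, le_div_iff₀ hU, mul_comm]
  exact mul_le_geometric_of_lacunary hDU hUD hg0 hg 0 r

lemma mul_tsum_le_of_lacunary (hU : 0 < U 0) (i : ℕ) : U i * ∑' r, g (r + (i + 1)) ≤ 1 / 14 := by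
  have hgeom := summable_geometric_of_lt_one (by norm_num) (by norm_num : (1 / 8 : ℝ) < 1)
  calc U i * ∑' r, g (r + (i + 1)) = ∑' r, U i * g (r + (i + 1)) := tsum_mul_left.symm
    _ ≤ ∑' r : ℕ, 1 / 16 * (1 / 8 : ℝ) ^ r :=
        ((summable_nat_add_iff (i + 1)).2 (summable_of_lacunary hDU hUD hg0 hg hU)).mul_left (U i)
          |>.tsum_le_tsum (mul_le_geometric_of_lacunary hDU hUD hg0 hg i) (hgeom.mul_left _)
    _ = 1 / 14 := by
        rw [tsum_mul_left, tsum_geometric_of_lt_one (by norm_num) (by norm_num)]; norm_num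

end Lacunary

lemma tsum_indicator_setOf_eq {T : ℕ → ℕ} (hT : Function.Injective T) (F : ℕ → ℕ) (A : ℕ → ℝ) :
    ∑' n, (({t | ∃ i, t = T i}.indicator F n : ℕ) : ℝ) / A n = ∑' i, (F (T i) : ℝ) / A (T i) := by
  rw [← hT.tsum_eq]
  · exact tsum_congr fun i => by rw [indicator_of_mem (show T i ∈ {t | ∃ j, t = T j} from ⟨i, rfl⟩)]
  · intro n hn
    by_contra hnT
    refine hn ?_
    have : n ∉ {t | ∃ i, t = T i} := fun ⟨i, hi⟩ => hnT ⟨i, hi.symm⟩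
    simp only [indicator_of_notMem this, Nat.cast_zero, zero_div]

namespace IsArithSeq

variable {a : ℕ → ℕ} (ha : IsArithSeq a)
include ha

lemma pos : ∀ n, 0 < a n
  | 0 => ha.1 ▸ one_pos
  | n + 1 => (Nat.zero_le _).trans_lt (ha.2.1 n)

lemma strictMono : StrictMono a := strictMono_nat_of_lt_succ ha.2.1

lemma dvd_of_le {m n : ℕ} (h : m ≤ n) : a m ∣ a n :=
  Nat.rel_of_forall_rel_succ_of_le (· ∣ ·) ha.2.2 h

lemma mul_ratios (n : ℕ) : a n * ratios a (n + 1) = a (n + 1) := Nat.mul_div_cancel' (ha.2.2 n)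

lemma two_le_ratios (n : ℕ) : 2 ≤ ratios a (n + 1) :=
  Nat.lt_of_mul_lt_mul_left (a := a n) (by rw [mul_one, ha.mul_ratios]; exact ha.2.1 n)

lemma two_mul_mul_div_le_one (n m : ℕ) (hm : 2 ≤ m) :
    2 * a n * ((ratios a (n + 1) / m : ℕ) / a (n + 1) : ℝ) ≤ 1 := by
  have hc : (ratios a (n + 1) / m) * 2 ≤ ratios a (n + 1) :=
    (Nat.mul_le_mul_right 2 (Nat.div_le_div_left hm two_pos)).trans (Nat.div_mul_le_self _ _)
  have hc' : ((ratios a (n + 1) / m : ℕ) : ℝ) * 2 ≤ ratios a (n + 1) := by exact_mod_cast hc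
  have hb : (0 : ℝ) < ratios a (n + 1) := by exact_mod_cast (two_pos.trans_le (ha.two_le_ratios n))
  have := ha.pos n
  calc 2 * a n * ((ratios a (n + 1) / m : ℕ) / a (n + 1) : ℝ)
      = (ratios a (n + 1) / m : ℕ) * 2 / ratios a (n + 1) := by
        rw [← ha.mul_ratios n]; push_cast; field_simp
    _ ≤ 1 := (div_le_one hb).2 hc'

lemma natCast_mul_mul_div_succ (n w c : ℕ) :
    ((a n * w : ℕ) : ℝ) * (c / a (n + 1)) = (w * c : ℝ) / ratios a (n + 1) := by
  have := ha.pos n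
  rw [← ha.mul_ratios n]
  push_cast
  field_simp

end IsArithSeq

theorem exists_digits_not_mem_charSub_general (a : ℕ → ℕ) (ha : IsArithSeq a)
    (u : ℕ → ℕ)
    (k v : ℕ → ℕ) (huv : ∀ n, u n = a (k n) * v n)
    (hndvd : ∀ n, ¬ (ratios a (k n + 1)) ∣ v n)
    (s : ℕ → ℕ)
    (hgap : ∀ i, 8 * u (s i) ≤ a (k (s (i + 1)))) :
    ∃ m : ℕ → ℕ,
      (∀ t ∈ {t : ℕ | ∃ i, t = k (s i) + 1}, 1 < m t ∧ m t ≤ ratios a t) ∧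
      (↑(∑' n : ℕ,
          (({t : ℕ | ∃ i, t = k (s i) + 1}.indicator (fun t => ratios a t / m t) n : ℕ) : ℝ) /
            (a n : ℝ)) : AddCircle (1 : ℝ)) ∉ charSub (fun n => (u n : ℤ)) := by
  have hau : ∀ n, a (k n) ≤ u n := fun n =>
    huv n ▸ Nat.le_mul_of_pos_right _ (Nat.pos_of_ne_zero fun h => hndvd n (h ▸ dvd_zero _))
  have hks : StrictMono fun i => k (s i) := strictMono_nat_of_lt_succ fun i =>
    ha.strictMono.lt_iff_lt.1 (by linarith [hau (s i), ha.pos (k (s i)), hgap i])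
  have hT : Function.Injective fun i => k (s i) + 1 := fun i j h =>
    hks.injective (Nat.add_right_cancel h)
  choose M hM1 hMb z hz using fun i =>
    exists_frac_mul_div_mem_Icc (two_pos.trans_le (ha.two_le_ratios (k (s i)))) (hndvd (s i))
  refine ⟨M ∘ Function.invFun fun i => k (s i) + 1, ?_, ?_⟩
  · rintro _ ⟨i, rfl⟩
    rw [Function.comp_apply, Function.leftInverse_invFun hT i]
    exact ⟨hM1 i, hMb i⟩
  rw [tsum_indicator_setOf_eq hT]
  simp only [Function.comp_apply, Function.leftInverse_invFun hT _]
  set g : ℕ → ℝ := fun i => ((ratios a (k (s i) + 1) / M i : ℕ) : ℝ) / a (k (s i) + 1)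
  have hDU : ∀ j, (a (k (s j)) : ℝ) ≤ u (s j) := fun j => by exact_mod_cast hau (s j)
  have hUD : ∀ j, 8 * (u (s j) : ℝ) ≤ a (k (s (j + 1))) := fun j => by exact_mod_cast hgap j
  have hg0 : ∀ j, 0 ≤ g j := fun j => by positivity
  have hg : ∀ j, 2 * (a (k (s j)) : ℝ) * g j ≤ 1 := fun j =>
    ha.two_mul_mul_div_le_one _ _ (hM1 j)
  have hU : (0 : ℝ) < u (s 0) := by exact_mod_cast (ha.pos _).trans_le (hau _)
  have hbound : ∀ i, 5 / 28 ≤ ‖(u (s i) : ℤ) • ((∑' j, g j : ℝ) : AddCircle (1 : ℝ))‖ := by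
    intro i
    rw [natCast_zsmul]
    refine le_norm_nsmul_coe_tsum (summable_of_lacunary hDU hUD hg0 hg hU) (fun j hj => ?_)
      (z := z i) ?_ ⟨?_, mul_tsum_le_of_lacunary hDU hUD hg0 hg hU i⟩
    · exact coe_natCast_mul_div_eq_zero
        ((ha.dvd_of_le (hks hj)).trans (huv (s i) ▸ dvd_mul_right _ _)) _
    · rw [huv (s i)]
      simpa only [g, ha.natCast_mul_mul_div_succ] using hz i
    · exact mul_nonneg (Nat.cast_nonneg _) (tsum_nonneg fun r => hg0 _)
  intro (hmem : Tendsto _ atTop _)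
  have hs : Tendsto s atTop atTop := (Function.Injective.of_comp hks.injective).nat_tendsto_atTop
  obtain ⟨i, hi⟩ := ((hmem.comp hs).norm.eventually_lt_const
    (by rw [norm_zero]; norm_num : ‖(0 : AddCircle (1 : ℝ))‖ < 5 / 28)).exists
  exact (hbound i).not_gt hi

/-- for `u n = a (k n) * v n` with `k n → ∞`, `b (k n + 1) ∤ v n`, and a
subsequence `(s i)` with `a (k (s (i+1))) ≥ 8 u (s i)`, there are integers `m t` with
`1 < m t ≤ b t` such that the point `x` with canonical digits `c t = ⌊b t / m t⌋` for
`t ∈ {k (s i) + 1 : i ∈ ℕ}` and `c t = 0` otherwise satisfies `x ∉ t_{(u n)}(𝕋)`. -/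
theorem exists_digits_not_mem_charSub (a : ℕ → ℕ) (ha : IsArithSeq a)
    (u : ℕ → ℕ) (hu : StrictMono u) (hupos : ∀ n, 0 < u n)
    (k v : ℕ → ℕ) (huv : ∀ n, u n = a (k n) * v n)
    (hk : Tendsto k atTop atTop)
    (hndvd : ∀ n, ¬ (ratios a (k n + 1)) ∣ v n)
    (s : ℕ → ℕ) (hs : StrictMono s)
    (hgap : ∀ i, 8 * u (s i) ≤ a (k (s (i + 1)))) :
    ∃ m : ℕ → ℕ,
      (∀ t ∈ {t : ℕ | ∃ i, t = k (s i) + 1}, 1 < m t ∧ m t ≤ ratios a t) ∧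
      (↑(∑' n : ℕ,
          (({t : ℕ | ∃ i, t = k (s i) + 1}.indicator (fun t => ratios a t / m t) n : ℕ) : ℝ) /
            (a n : ℝ)) : AddCircle (1 : ℝ)) ∉ charSub (fun n => (u n : ℤ)) :=
  exists_digits_not_mem_charSub_general a ha u k v huv hndvd s hgap
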